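/- Fix an integer n ≥ 1, masses m₁, m₂ > 0, exponents γ₁, γ₂ with 1 < γ_i ≤ 2, and constants 0 < λ ≤ Λ. There exists a constant C, depending only on λ, Λ, m₁, m₂, γ₁, γ₂, such that the following holds. Let U = (n₁, n₂, w) : ℝⁿ → ℝ² × ℝⁿ and V = (ν₁, ν₂, ω) : ℝⁿ → ℝ² × ℝⁿ be measurable fields with λ ≤ n₁(x), n₂(x) ≤ Λ for all x, and ν₁(x), ν₂(x) ≥ 0 with ρ(V(x)) > 0 for a.e. x. Define pointwise, for 1 ≤ i ≤ n, the relative flux columns [A(V|U)]_i := ( (n₁/ρ(U) − ν₁/ρ(V)) ρ(V)(u(U)_i − u(V)_i) , (n₂/ρ(U) − ν₂/ρ(V)) ρ(V)(u(U)_i − u(V)_i) , ρ(V)(u(V) − u(U))(u(V)_i − u(U)_i) + (γ₁−1) s₁(ν₁|n₁) e_i + (γ₂−1) s₂(ν₂|n₂) e_i ), and the relative entropy density η(V|U) := (ρ(V)/2)|u(V) − u(U)|² + s₁(ν₁|n₁) + s₂(ν₂|n₂). If ∫_{ℝⁿ} η(V(x)|U(x)) dx < ∞, then ∫_{ℝⁿ}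 Σ_{i=1}^{n} |[A(V(x)|U(x))]_i| dx ≤ C ∫_{ℝⁿ} η(V(x)|U(x)) dx. -/

import Mathlib

open MeasureTheory

/-- The isentropic internal-energy function `s(x) = m^{n(γ−1)/2} x^γ/(γ−1)`. -/
noncomputable def sFn (n : ℕ) (m γ : ℝ) (x : ℝ) : ℝ :=
  m ^ ((n : ℝ) * (γ - 1) / 2) * x ^ γ / (γ - 1)

/-- Its derivative `s′(x) = γ m^{n(γ−1)/2} x^{γ−1}/(γ−1)`. -/
noncomputable def sFn' (n : ℕ) (m γ : ℝ) (x : ℝ) : ℝ :=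
  γ * m ^ ((n : ℝ) * (γ - 1) / 2) * x ^ (γ - 1) / (γ - 1)

/-- The relative quantity `s(y|x) = s(y) − s(x) − s′(x)(y − x)`. -/
noncomputable def sRel (n : ℕ) (m γ : ℝ) (y x : ℝ) : ℝ :=
  sFn n m γ y - sFn n m γ x - sFn' n m γ x * (y - x)

/-- The relative entropy density
`η(V|U) = (ρ(V)/2)|u(V) − u(U)|² + s₁(ν₁|n₁) + s₂(ν₂|n₂)` of the states
`U = (n₁, n₂, w)` and `V = (ν₁, ν₂, ω)`, with `ρ = m₁·(1st) + m₂·(2nd)` and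
`u = (momentum)/ρ`. -/
noncomputable def relEntDens (n : ℕ) (m₁ m₂ γ₁ γ₂ : ℝ) (n₁ n₂ ν₁ ν₂ : ℝ)
    (w ω : EuclideanSpace ℝ (Fin n)) : ℝ :=
  (m₁ * ν₁ + m₂ * ν₂) / 2 *
      ‖(m₁ * ν₁ + m₂ * ν₂)⁻¹ • ω - (m₁ * n₁ + m₂ * n₂)⁻¹ • w‖ ^ 2
    + sRel n m₁ γ₁ ν₁ n₁ + sRel n m₂ γ₂ ν₂ n₂

/-- The `i`-th relative flux column `[A(V|U)]_i`, for `U = (n₁, n₂, w)`,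
`V = (ν₁, ν₂, ω)`, `u(U) = w/ρ(U)`, `u(V) = ω/ρ(V)`:
`((n₁/ρ(U) − ν₁/ρ(V)) ρ(V)(u(U)_i − u(V)_i),
  (n₂/ρ(U) − ν₂/ρ(V)) ρ(V)(u(U)_i − u(V)_i),
  ρ(V)(u(V) − u(U))(u(V)_i − u(U)_i) + (γ₁−1)s₁(ν₁|n₁)e_i + (γ₂−1)s₂(ν₂|n₂)e_i)`. -/
noncomputable def relFluxCol (n : ℕ) (m₁ m₂ γ₁ γ₂ : ℝ) (i : Fin n) (n₁ n₂ ν₁ ν₂ : ℝ)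
    (w ω : EuclideanSpace ℝ (Fin n)) : ℝ × ℝ × EuclideanSpace ℝ (Fin n) :=
  ((n₁ / (m₁ * n₁ + m₂ * n₂) - ν₁ / (m₁ * ν₁ + m₂ * ν₂)) * (m₁ * ν₁ + m₂ * ν₂) *
      (((m₁ * n₁ + m₂ * n₂)⁻¹ • w) i - ((m₁ * ν₁ + m₂ * ν₂)⁻¹ • ω) i),
   (n₂ / (m₁ * n₁ + m₂ * n₂) - ν₂ / (m₁ * ν₁ + m₂ * ν₂)) * (m₁ * ν₁ + m₂ * ν₂) *
      (((m₁ * n₁ + m₂ * n₂)⁻¹ • w) i - ((m₁ * ν₁ + m₂ * ν₂)⁻¹ • ω) i),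
   ((m₁ * ν₁ + m₂ * ν₂) *
        (((m₁ * ν₁ + m₂ * ν₂)⁻¹ • ω) i - ((m₁ * n₁ + m₂ * n₂)⁻¹ • w) i)) •
       ((m₁ * ν₁ + m₂ * ν₂)⁻¹ • ω - (m₁ * n₁ + m₂ * n₂)⁻¹ • w) +
     ((γ₁ - 1) * sRel n m₁ γ₁ ν₁ n₁ + (γ₂ - 1) * sRel n m₂ γ₂ ν₂ n₂) •
       EuclideanSpace.single i 1)

/-- The Euclidean norm `√(a² + b² + |z|²)` of a triple `(a, b, z) ∈ ℝ × ℝ × ℝⁿ`. -/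
noncomputable def tripNorm {n : ℕ} (T : ℝ × ℝ × EuclideanSpace ℝ (Fin n)) : ℝ :=
  Real.sqrt (T.1 ^ 2 + T.2.1 ^ 2 + ‖T.2.2‖ ^ 2)

/-!
With `F_k := n_k ρ(V)/ρ(U) − ν_k` and `d := |u(V) − u(U)|`, every column of `A(V|U)` has norm
at most `(|F₁| + |F₂|) d + ρ(V) d² + s₁(ν₁|n₁) + s₂(ν₂|n₂)`, and by Young's
inequality `(|F₁| + |F₂|) d ≤ ρ(V) d²/2 + (|F₁| + |F₂|)²/(2ρ(V))`. So everything reduces to bounding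
`(|F₁| + |F₂|)²/ρ(V)` by the relative entropies, pointwise and uniformly in `n_k ∈ [λ, Λ]`.

Convexity of `t ↦ t^γ` gives `s(ν|n) ≥ c min(|ν − n|, |ν − n|²)`: quadratically for `ν ≤ n + 1`,
since `(t^γ)'' ≥ γ(γ − 1)T^{γ−2}` on `[0, T]` when `γ ≤ 2`, and linearly beyond, by monotonicity of
secant slopes. On the other side, `|F_k|` is bounded both by a multiple of `a := max_k |ν_k − n_k|`
and by a multiple of `ρ(V)`, and a small `ρ(V)` forces `ν₁` far below `n₁ ≥ λ`, hence `a ≥ λ/2`.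
These combine into `(|F₁| + |F₂|)²/ρ(V) ≤ C min(a, a²)`. Integrating the pointwise bound finishes
the proof.
-/

open Real Set

theorem ConvexOn.add_mul_sub_le_of_hasDerivAt {S : Set ℝ} {f : ℝ → ℝ} {x y f' : ℝ}
    (hf : ConvexOn ℝ S f) (hx : x ∈ S) (hy : y ∈ S) (hd : HasDerivAt f f' x) :
    f x + f' * (y - x) ≤ f y := by
  rcases lt_trichotomy x y with h | rfl | h
  · have := hf.le_slope_of_hasDerivAt hx hy h hd
    rw [slope_def_field, le_div_iff₀ (sub_pos.2 h)] at this
    linarith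
  · simp
  · have := hf.slope_le_of_hasDerivAt hy hx h hd
    rw [slope_def_field, div_le_iff₀ (sub_pos.2 h)] at this
    linarith

noncomputable def rpowBregman (γ y x : ℝ) : ℝ :=
  y ^ γ - x ^ γ - γ * x ^ (γ - 1) * (y - x)

lemma sRel_eq_mul_rpowBregman (n : ℕ) (m γ y x : ℝ) :
    sRel n m γ y x = m ^ ((n : ℝ) * (γ - 1) / 2) / (γ - 1) * rpowBregman γ y x := by
  simp only [sRel, sFn, sFn', rpowBregman]
  ring

lemma convexOn_rpow_sub_mul_sq {γ T : ℝ} (hγ : 1 ≤ γ) (hγ₂ : γ ≤ 2) :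
    ConvexOn ℝ (Icc 0 T) fun t ↦ t ^ γ - γ * (γ - 1) * T ^ (γ - 2) / 2 * t ^ 2 := by
  set c := γ * (γ - 1) * T ^ (γ - 2) / 2
  refine convexOn_of_hasDerivWithinAt2_nonneg (convex_Icc 0 T)
    (f' := fun t ↦ γ * t ^ (γ - 1) - c * (2 * t))
    (f'' := fun t ↦ γ * ((γ - 1) * t ^ (γ - 2)) - c * 2) ?_ ?_ ?_ ?_
  · exact ((continuous_rpow_const (by linarith)).sub
      (continuous_const.mul (continuous_pow 2))).continuousOn
  · rw [interior_Icc]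
    intro t ht
    exact (((hasDerivAt_rpow_const (Or.inl ht.1.ne')).sub
      (((hasDerivAt_pow 2 t).const_mul c).congr_deriv (by ring)))).hasDerivWithinAt
  · rw [interior_Icc]
    intro t ht
    have h := ((hasDerivAt_rpow_const (p := γ - 1) (Or.inl ht.1.ne')).const_mul γ).sub
      (((hasDerivAt_id t).const_mul 2).const_mul c)
    rw [show γ - 1 - 1 = γ - 2 by ring] at h
    exact (h.congr_deriv (by simp)).hasDerivWithinAt
  · rw [interior_Icc]
    intro t ht
    have : T ^ (γ - 2) ≤ t ^ (γ - 2) := rpow_le_rpow_of_nonpos ht.1 ht.2.le (by linarith)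
    have : 0 ≤ γ * (γ - 1) := mul_nonneg (by linarith) (by linarith)
    simp only [c]
    nlinarith

lemma mul_sq_le_rpowBregman {γ T x y : ℝ} (hγ : 1 ≤ γ) (hγ₂ : γ ≤ 2) (hx : 0 < x)
    (hxT : x ≤ T) (hy : 0 ≤ y) (hyT : y ≤ T) :
    γ * (γ - 1) * T ^ (γ - 2) / 2 * (y - x) ^ 2 ≤ rpowBregman γ y x := by
  set c := γ * (γ - 1) * T ^ (γ - 2) / 2
  have hd : HasDerivAt (fun t ↦ t ^ γ - c * t ^ 2) (γ * x ^ (γ - 1) - c * (2 * x)) x :=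
    (hasDerivAt_rpow_const (Or.inl hx.ne')).sub
      (((hasDerivAt_pow 2 x).const_mul c).congr_deriv (by ring))
  have := (convexOn_rpow_sub_mul_sq hγ hγ₂).add_mul_sub_le_of_hasDerivAt
    ⟨hx.le, hxT⟩ ⟨hy, hyT⟩ hd
  simp only [rpowBregman, c] at this ⊢
  linarith

lemma mul_rpowBregman_add_one_le {γ x y : ℝ} (hγ : 1 ≤ γ) (hx : 0 ≤ x) (hxy : x + 1 ≤ y) :
    (y - x) * rpowBregman γ (x + 1) x ≤ rpowBregman γ y x := by
  have h := (convexOn_rpow hγ).secant_mono (mem_Ici.2 hx) (mem_Ici.2 (by linarith))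
    (mem_Ici.2 (by linarith)) (by simp) (by linarith) hxy
  rw [add_sub_cancel_left, div_one, le_div_iff₀ (by linarith)] at h
  simp only [rpowBregman, add_sub_cancel_left, mul_one]
  nlinarith

lemma mul_min_le_rpowBregman {γ T x y : ℝ} (hγ : 1 ≤ γ) (hγ₂ : γ ≤ 2) (hx : 0 < x)
    (hxT : x + 1 ≤ T) (hy : 0 ≤ y) :
    γ * (γ - 1) * T ^ (γ - 2) / 2 * min |y - x| ((y - x) ^ 2) ≤ rpowBregman γ y x := by
  set c := γ * (γ - 1) * T ^ (γ - 2) / 2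
  have hc : 0 ≤ c := by
    have : 0 ≤ T ^ (γ - 2) := rpow_nonneg (by linarith) _
    have : 0 ≤ γ * (γ - 1) := mul_nonneg (by linarith) (by linarith)
    positivity
  rcases le_or_gt y (x + 1) with hyx | hyx
  · calc c * min |y - x| ((y - x) ^ 2) ≤ c * (y - x) ^ 2 :=
          mul_le_mul_of_nonneg_left (min_le_right _ _) hc
      _ ≤ rpowBregman γ y x := mul_sq_le_rpowBregman hγ hγ₂ hx (by linarith) hy (by linarith)
  · have hone : c ≤ rpowBregman γ (x + 1) x := by
      simpa using mul_sq_le_rpowBregman hγ hγ₂ hx (by linarith) (by linarith) hxT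
    calc c * min |y - x| ((y - x) ^ 2) ≤ (y - x) * c := by
          rw [mul_comm, abs_of_pos (by linarith)]
          exact mul_le_mul_of_nonneg_right (min_le_left _ _) hc
      _ ≤ (y - x) * rpowBregman γ (x + 1) x :=
          mul_le_mul_of_nonneg_left hone (by linarith)
      _ ≤ rpowBregman γ y x := mul_rpowBregman_add_one_le hγ hx.le hyx.le

lemma exists_mul_min_le_sRel (n : ℕ) {m γ ub : ℝ} (hm : 0 < m) (hγ : 1 < γ) (hγ₂ : γ ≤ 2)
    (hub : 0 ≤ ub) :
    ∃ c > 0, ∀ x y, 0 < x → x ≤ ub → 0 ≤ y → c * min |y - x| ((y - x) ^ 2) ≤ sRel n m γ y x := by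
  set M := m ^ ((n : ℝ) * (γ - 1) / 2)
  have hM : 0 < M := rpow_pos_of_pos hm _
  have hT : 0 < (ub + 1) ^ (γ - 2) := rpow_pos_of_pos (by linarith) _
  refine ⟨M * γ * (ub + 1) ^ (γ - 2) / 2, by positivity, fun x y hx hxu hy ↦ ?_⟩
  have h := mul_le_mul_of_nonneg_left
    (mul_min_le_rpowBregman (T := ub + 1) hγ.le hγ₂ hx (by linarith) hy)
    (div_pos hM (sub_pos.2 hγ)).le
  rw [sRel_eq_mul_rpowBregman]
  refine le_of_eq_of_le ?_ h
  field_simp [(sub_pos.2 hγ).ne']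

lemma div_sub_div_mul_self_eq {n ν P ρ : ℝ} (hP : P ≠ 0) (hρ : ρ ≠ 0) :
    (n / P - ν / ρ) * ρ = n / P * (ρ - P) - (ν - n) := by
  field_simp
  ring

lemma abs_div_sub_div_mul_self_le_mul {m n ν P ρ : ℝ} (hm : 0 < m) (hn : 0 ≤ n) (hν : 0 ≤ ν)
    (hP : m * n ≤ P) (hρ : m * ν ≤ ρ) (hP0 : 0 < P) (hρ0 : 0 < ρ) :
    |(n / P - ν / ρ) * ρ| ≤ 2 / m * ρ := by
  have hnP : n / P ≤ 1 / m := by rw [div_le_div_iff₀ hP0 hm]; linarith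
  have hνρ : ν ≤ 1 / m * ρ := by rw [one_div_mul_eq_div, le_div_iff₀ hm]; linarith
  rw [sub_mul, div_mul_cancel₀ _ hρ0.ne']
  refine (abs_sub _ _).trans ?_
  rw [abs_of_nonneg (by positivity), abs_of_nonneg hν]
  linarith [mul_le_mul_of_nonneg_right hnP hρ0.le, show 2 / m * ρ = 1 / m * ρ + 1 / m * ρ by ring]

lemma abs_div_sub_div_mul_self_le {m n ν P ρ : ℝ} (hm : 0 < m) (hn : 0 ≤ n) (hP : m * n ≤ P)
    (hP0 : 0 < P) (hρ0 : ρ ≠ 0) :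
    |(n / P - ν / ρ) * ρ| ≤ |ρ - P| / m + |ν - n| := by
  have hnP : n / P ≤ 1 / m := by rw [div_le_div_iff₀ hP0 hm]; linarith
  rw [div_sub_div_mul_self_eq hP0.ne' hρ0]
  refine (abs_sub _ _).trans ?_
  rw [abs_mul, abs_of_nonneg (by positivity : 0 ≤ n / P)]
  have := mul_le_mul_of_nonneg_right hnP (abs_nonneg (ρ - P))
  rw [one_div_mul_eq_div] at this
  linarith

lemma sq_div_le_mul_min {F a ρ A B δ ε : ℝ} (hA : 0 ≤ A) (hδ : 0 < δ) (hε : 0 < ε)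
    (ha : 0 ≤ a) (hρ : 0 < ρ) (hF : 0 ≤ F) (hFa : F ≤ A * a) (hFρ : F ≤ B * ρ)
    (hsmall : ρ < δ → ε ≤ a) :
    F ^ 2 / ρ ≤ (A * B * (1 + 1 / ε) + A ^ 2 / δ) * min a (a ^ 2) := by
  have hB : 0 ≤ B := nonneg_of_mul_nonneg_left (hF.trans hFρ) hρ
  have hlin : F ^ 2 / ρ ≤ A * B * a := by
    rw [div_le_iff₀ hρ]
    nlinarith [mul_le_mul hFa hFρ hF (by positivity)]
  have hquad : F ^ 2 / ρ ≤ A ^ 2 * a ^ 2 / ρ :=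
    div_le_div_of_nonneg_right (by nlinarith) hρ.le
  have hAB : 0 ≤ A * B := mul_nonneg hA hB
  have hAδ : 0 ≤ A ^ 2 / δ := by positivity
  rcases le_total 1 a with h1 | h1
  · rw [min_eq_left (by nlinarith)]
    nlinarith [mul_nonneg hAB (mul_nonneg (one_div_nonneg.2 hε.le) ha)]
  · rw [min_eq_right (by nlinarith)]
    by_cases hρδ : ρ < δ
    · have haε := hsmall hρδ
      have : a ≤ 1 / ε * a ^ 2 := by
        rw [one_div_mul_eq_div, le_div_iff₀ hε]
        nlinarith
      have := mul_le_mul_of_nonneg_left this hAB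
      nlinarith [mul_nonneg hAδ (sq_nonneg a), mul_nonneg hAB (sq_nonneg a)]
    · have : A ^ 2 * a ^ 2 / ρ ≤ A ^ 2 / δ * a ^ 2 := by
        rw [div_mul_eq_mul_div, mul_comm (A ^ 2) (a ^ 2)]
        exact div_le_div_of_nonneg_left (by positivity) hδ (not_lt.1 hρδ)
      nlinarith [mul_nonneg hAB (sq_nonneg a),
        mul_nonneg (mul_nonneg hAB (one_div_nonneg.2 hε.le)) (sq_nonneg a)]

lemma tripNorm_le {n : ℕ} (T : ℝ × ℝ × EuclideanSpace ℝ (Fin n)) :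
    tripNorm T ≤ |T.1| + |T.2.1| + ‖T.2.2‖ := by
  rw [tripNorm, sqrt_le_left (by positivity)]
  nlinarith [sq_abs T.1, sq_abs T.2.1, abs_nonneg T.1, abs_nonneg T.2.1, norm_nonneg T.2.2,
    mul_nonneg (abs_nonneg T.1) (abs_nonneg T.2.1)]

lemma tripNorm_flux_column_le {n : ℕ} (i : Fin n) (F₁ F₂ ρ G : ℝ) (u v : EuclideanSpace ℝ (Fin n))
    (hρ : 0 ≤ ρ) (hG : 0 ≤ G) :
    tripNorm (F₁ * (u i - v i), F₂ * (u i - v i),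
      (ρ * (v i - u i)) • (v - u) + G • EuclideanSpace.single i 1) ≤
      (|F₁| + |F₂|) * ‖v - u‖ + ρ * ‖v - u‖ ^ 2 + G := by
  have hi : |v i - u i| ≤ ‖v - u‖ := by
    simpa using PiLp.norm_apply_le (v - u) i
  have hi' : |u i - v i| ≤ ‖v - u‖ := abs_sub_comm (u i) (v i) ▸ hi
  have hz : ‖(ρ * (v i - u i)) • (v - u) + G • EuclideanSpace.single i (1 : ℝ)‖ ≤
      ρ * ‖v - u‖ ^ 2 + G := by
    refine (norm_add_le _ _).trans ?_
    rw [norm_smul, norm_smul, PiLp.norm_single, norm_one, Real.norm_eq_abs,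
      Real.norm_eq_abs, abs_mul, abs_of_nonneg hρ, abs_of_nonneg hG]
    nlinarith [mul_le_mul_of_nonneg_left hi hρ, norm_nonneg (v - u)]
  refine (tripNorm_le _).trans ?_
  simp only [abs_mul]
  nlinarith [mul_le_mul_of_nonneg_left hi' (abs_nonneg F₁),
    mul_le_mul_of_nonneg_left hi' (abs_nonneg F₂)]

lemma mul_add_le_mul_of_sq_div_le {F d ρ S K : ℝ} (hρ : 0 < ρ) (hS : 0 ≤ S) (hK : 0 ≤ K)
    (hF : F ^ 2 / ρ ≤ K * S) :
    F * d + ρ * d ^ 2 + S ≤ (3 + K) * (ρ / 2 * d ^ 2 + S) := by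
  have hYoung : F * d ≤ ρ * d ^ 2 / 2 + F ^ 2 / ρ / 2 := by
    obtain ⟨t, rfl⟩ : ∃ t, F = t * ρ := ⟨F / ρ, (div_mul_cancel₀ F hρ.ne').symm⟩
    rw [show (t * ρ) ^ 2 / ρ = t ^ 2 * ρ by field_simp]
    nlinarith [mul_nonneg hρ.le (sq_nonneg (d - t))]
  nlinarith [mul_nonneg hK (mul_nonneg hρ.le (sq_nonneg d))]

lemma exists_sq_div_le_mul_min {m₁ m₂ lb : ℝ} (hm₁ : 0 < m₁) (hm₂ : 0 < m₂) (hlb : 0 < lb) :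
    ∃ C₀ ≥ 0, ∀ n₁ n₂ ν₁ ν₂ : ℝ, lb ≤ n₁ → lb ≤ n₂ → 0 ≤ ν₁ → 0 ≤ ν₂ →
      0 < m₁ * ν₁ + m₂ * ν₂ →
      (|(n₁ / (m₁ * n₁ + m₂ * n₂) - ν₁ / (m₁ * ν₁ + m₂ * ν₂)) * (m₁ * ν₁ + m₂ * ν₂)| +
          |(n₂ / (m₁ * n₁ + m₂ * n₂) - ν₂ / (m₁ * ν₁ + m₂ * ν₂)) * (m₁ * ν₁ + m₂ * ν₂)|) ^ 2 /
          (m₁ * ν₁ + m₂ * ν₂) ≤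
        C₀ * min (max |ν₁ - n₁| |ν₂ - n₂|) (max |ν₁ - n₁| |ν₂ - n₂| ^ 2) := by
  set A := (m₁ + m₂) / m₁ + (m₁ + m₂) / m₂ + 2
  set B := 2 / m₁ + 2 / m₂
  refine ⟨A * B * (1 + 1 / (lb / 2)) + A ^ 2 / (m₁ * lb / 2), by positivity, ?_⟩
  intro n₁ n₂ ν₁ ν₂ hn₁ hn₂ hν₁ hν₂ hρ
  set P := m₁ * n₁ + m₂ * n₂
  set ρ := m₁ * ν₁ + m₂ * ν₂
  set a := max |ν₁ - n₁| |ν₂ - n₂|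
  have hn₁0 : 0 < n₁ := hlb.trans_le hn₁
  have hn₂0 : 0 < n₂ := hlb.trans_le hn₂
  have hP : 0 < P := by positivity
  have hP₁ : m₁ * n₁ ≤ P := le_add_of_nonneg_right (by positivity)
  have hP₂ : m₂ * n₂ ≤ P := le_add_of_nonneg_left (by positivity)
  have ha₁ : |ν₁ - n₁| ≤ a := le_max_left _ _
  have ha₂ : |ν₂ - n₂| ≤ a := le_max_right _ _
  have hρP : |ρ - P| ≤ (m₁ + m₂) * a := by
    rw [show ρ - P = m₁ * (ν₁ - n₁) + m₂ * (ν₂ - n₂) by ring]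
    refine (abs_add_le _ _).trans ?_
    rw [abs_mul, abs_mul, abs_of_pos hm₁, abs_of_pos hm₂, add_mul]
    exact add_le_add (mul_le_mul_of_nonneg_left ha₁ hm₁.le) (mul_le_mul_of_nonneg_left ha₂ hm₂.le)
  have hFa : |(n₁ / P - ν₁ / ρ) * ρ| + |(n₂ / P - ν₂ / ρ) * ρ| ≤ A * a := by
    have h₁ := abs_div_sub_div_mul_self_le (ν := ν₁) hm₁ hn₁0.le hP₁ hP hρ.ne'
    have h₂ := abs_div_sub_div_mul_self_le (ν := ν₂) hm₂ hn₂0.le hP₂ hP hρ.ne'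
    have e₁ : |ρ - P| / m₁ ≤ (m₁ + m₂) / m₁ * a := by
      rw [div_mul_eq_mul_div]; exact div_le_div_of_nonneg_right hρP hm₁.le
    have e₂ : |ρ - P| / m₂ ≤ (m₁ + m₂) / m₂ * a := by
      rw [div_mul_eq_mul_div]; exact div_le_div_of_nonneg_right hρP hm₂.le
    linarith [show A * a = (m₁ + m₂) / m₁ * a + (m₁ + m₂) / m₂ * a + 2 * a by ring]
  have hFρ : |(n₁ / P - ν₁ / ρ) * ρ| + |(n₂ / P - ν₂ / ρ) * ρ| ≤ B * ρ := by
    have h₁ := abs_div_sub_div_mul_self_le_mul hm₁ hn₁0.le hν₁ hP₁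
      (le_add_of_nonneg_right (by positivity) : m₁ * ν₁ ≤ ρ) hP hρ
    have h₂ := abs_div_sub_div_mul_self_le_mul hm₂ hn₂0.le hν₂ hP₂
      (le_add_of_nonneg_left (by positivity) : m₂ * ν₂ ≤ ρ) hP hρ
    linarith [show B * ρ = 2 / m₁ * ρ + 2 / m₂ * ρ by ring]
  have hsmall : ρ < m₁ * lb / 2 → lb / 2 ≤ a := by
    intro h
    have : m₁ * ν₁ < m₁ * (lb / 2) := by nlinarith [mul_nonneg hm₂.le hν₂]
    have : ν₁ < lb / 2 := lt_of_mul_lt_mul_left this hm₁.le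
    exact le_trans (by rw [abs_sub_comm, abs_of_pos (by linarith)]; linarith) ha₁
  exact sq_div_le_mul_min (by positivity) (by positivity) (by positivity) (by positivity) hρ
    (by positivity) hFa hFρ hsmall

lemma exists_sum_tripNorm_relFluxCol_le (n : ℕ) {m₁ m₂ γ₁ γ₂ lb ub : ℝ} (hm₁ : 0 < m₁)
    (hm₂ : 0 < m₂) (hγ₁ : 1 < γ₁) (hγ₁' : γ₁ ≤ 2) (hγ₂ : 1 < γ₂) (hγ₂' : γ₂ ≤ 2)
    (hlb : 0 < lb) (hlu : lb ≤ ub) :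
    ∃ K > 0, ∀ (n₁ n₂ ν₁ ν₂ : ℝ) (w ω : EuclideanSpace ℝ (Fin n)),
      lb ≤ n₁ → n₁ ≤ ub → lb ≤ n₂ → n₂ ≤ ub → 0 ≤ ν₁ → 0 ≤ ν₂ → 0 < m₁ * ν₁ + m₂ * ν₂ →
      ∑ i, tripNorm (relFluxCol n m₁ m₂ γ₁ γ₂ i n₁ n₂ ν₁ ν₂ w ω) ≤
        n * K * relEntDens n m₁ m₂ γ₁ γ₂ n₁ n₂ ν₁ ν₂ w ω := by
  obtain ⟨c₁, hc₁, hS₁⟩ := exists_mul_min_le_sRel n hm₁ hγ₁ hγ₁' (hlb.le.trans hlu)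
  obtain ⟨c₂, hc₂, hS₂⟩ := exists_mul_min_le_sRel n hm₂ hγ₂ hγ₂' (hlb.le.trans hlu)
  obtain ⟨C₀, hC₀, hF⟩ := exists_sq_div_le_mul_min hm₁ hm₂ hlb
  have hc : 0 < min c₁ c₂ := lt_min hc₁ hc₂
  refine ⟨3 + C₀ / min c₁ c₂, by positivity, ?_⟩
  intro n₁ n₂ ν₁ ν₂ w ω hn₁ hn₁' hn₂ hn₂' hν₁ hν₂ hρ
  have hmin₁ := (mul_le_mul_of_nonneg_right (min_le_left c₁ c₂) (by positivity)).trans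
    (hS₁ n₁ ν₁ (hlb.trans_le hn₁) hn₁' hν₁)
  have hmin₂ := (mul_le_mul_of_nonneg_right (min_le_right c₁ c₂) (by positivity)).trans
    (hS₂ n₂ ν₂ (hlb.trans_le hn₂) hn₂' hν₂)
  rw [← sq_abs] at hmin₁ hmin₂
  set S₁ := sRel n m₁ γ₁ ν₁ n₁
  set S₂ := sRel n m₂ γ₂ ν₂ n₂
  have hS₁0 : 0 ≤ S₁ := le_trans (by positivity) hmin₁
  have hS₂0 : 0 ≤ S₂ := le_trans (by positivity) hmin₂
  have hSa : min c₁ c₂ * min (max |ν₁ - n₁| |ν₂ - n₂|) (max |ν₁ - n₁| |ν₂ - n₂| ^ 2) ≤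
      S₁ + S₂ := by
    rcases le_total |ν₁ - n₁| |ν₂ - n₂| with h | h
    · rw [max_eq_right h]; linarith
    · rw [max_eq_left h]; linarith
  have hG : (γ₁ - 1) * S₁ + (γ₂ - 1) * S₂ ≤ S₁ + S₂ :=
    add_le_add (mul_le_of_le_one_left hS₁0 (by linarith))
      (mul_le_of_le_one_left hS₂0 (by linarith))
  have hG0 : 0 ≤ (γ₁ - 1) * S₁ + (γ₂ - 1) * S₂ :=
    add_nonneg (mul_nonneg (by linarith) hS₁0) (mul_nonneg (by linarith) hS₂0)
  have hCS : C₀ * min (max |ν₁ - n₁| |ν₂ - n₂|) (max |ν₁ - n₁| |ν₂ - n₂| ^ 2) ≤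
      C₀ / min c₁ c₂ * (S₁ + S₂) := by
    rw [div_mul_eq_mul_div, le_div_iff₀ hc]
    nlinarith [mul_le_mul_of_nonneg_left hSa hC₀]
  calc ∑ i, tripNorm (relFluxCol n m₁ m₂ γ₁ γ₂ i n₁ n₂ ν₁ ν₂ w ω)
      ≤ ∑ _i : Fin n, ((|(n₁ / (m₁ * n₁ + m₂ * n₂) - ν₁ / (m₁ * ν₁ + m₂ * ν₂)) *
            (m₁ * ν₁ + m₂ * ν₂)| +
          |(n₂ / (m₁ * n₁ + m₂ * n₂) - ν₂ / (m₁ * ν₁ + m₂ * ν₂)) * (m₁ * ν₁ + m₂ * ν₂)|) *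
            ‖(m₁ * ν₁ + m₂ * ν₂)⁻¹ • ω - (m₁ * n₁ + m₂ * n₂)⁻¹ • w‖ +
          (m₁ * ν₁ + m₂ * ν₂) * ‖(m₁ * ν₁ + m₂ * ν₂)⁻¹ • ω - (m₁ * n₁ + m₂ * n₂)⁻¹ • w‖ ^ 2 +
          (S₁ + S₂)) :=
        Finset.sum_le_sum fun i _ ↦
          (tripNorm_flux_column_le i _ _ _ _ _ _ hρ.le hG0).trans (by linarith)
    _ ≤ n * ((3 + C₀ / min c₁ c₂) * relEntDens n m₁ m₂ γ₁ γ₂ n₁ n₂ ν₁ ν₂ w ω) := by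
        rw [Finset.sum_const, Finset.card_univ, Fintype.card_fin, nsmul_eq_mul, relEntDens,
          add_assoc _ S₁]
        exact mul_le_mul_of_nonneg_left
          (mul_add_le_mul_of_sq_div_le hρ (by positivity) (by positivity)
            ((hF n₁ n₂ ν₁ ν₂ hn₁ hn₂ hν₁ hν₂ hρ).trans hCS)) (Nat.cast_nonneg n)
    _ = n * (3 + C₀ / min c₁ c₂) * relEntDens n m₁ m₂ γ₁ γ₂ n₁ n₂ ν₁ ν₂ w ω := by ring

/-- The integrated relative flux is controlled by the integrated relative
entropy, with a constant depending only on `λ, Λ, m₁, m₂, γ₁, γ₂`. -/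
theorem relative_flux_le_relative_entropy (n : ℕ) (hn : 1 ≤ n)
    (m₁ m₂ γ₁ γ₂ lb ub : ℝ) (hm₁ : 0 < m₁) (hm₂ : 0 < m₂)
    (hγ₁ : 1 < γ₁) (hγ₁' : γ₁ ≤ 2) (hγ₂ : 1 < γ₂) (hγ₂' : γ₂ ≤ 2)
    (hlb : 0 < lb) (hlu : lb ≤ ub) :
    ∃ C : ℝ, 0 < C ∧
      ∀ (n₁ n₂ ν₁ ν₂ : EuclideanSpace ℝ (Fin n) → ℝ)
        (w ω : EuclideanSpace ℝ (Fin n) → EuclideanSpace ℝ (Fin n)),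
        Measurable n₁ → Measurable n₂ → Measurable ν₁ → Measurable ν₂ →
        Measurable w → Measurable ω →
        (∀ x, lb ≤ n₁ x ∧ n₁ x ≤ ub) → (∀ x, lb ≤ n₂ x ∧ n₂ x ≤ ub) →
        (∀ x, 0 ≤ ν₁ x) → (∀ x, 0 ≤ ν₂ x) →
        (∀ᵐ x ∂(volume : Measure (EuclideanSpace ℝ (Fin n))),
          0 < m₁ * ν₁ x + m₂ * ν₂ x) →
        (∫⁻ x, ENNReal.ofReal
            (relEntDens n m₁ m₂ γ₁ γ₂ (n₁ x) (n₂ x) (ν₁ x) (ν₂ x) (w x) (ω x))) < ⊤ →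
        (∫⁻ x, ENNReal.ofReal
            (∑ i : Fin n, tripNorm
              (relFluxCol n m₁ m₂ γ₁ γ₂ i (n₁ x) (n₂ x) (ν₁ x) (ν₂ x) (w x) (ω x)))) ≤
          ENNReal.ofReal C *
            ∫⁻ x, ENNReal.ofReal
              (relEntDens n m₁ m₂ γ₁ γ₂ (n₁ x) (n₂ x) (ν₁ x) (ν₂ x) (w x) (ω x)) := by
  obtain ⟨K, hK, hpt⟩ := exists_sum_tripNorm_relFluxCol_le n hm₁ hm₂ hγ₁ hγ₁' hγ₂ hγ₂' hlb hlu
  refine ⟨n * K, mul_pos (Nat.cast_pos.2 hn) hK, ?_⟩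
  intro n₁ n₂ ν₁ ν₂ w ω _ _ _ _ _ _ hn₁ hn₂ hν₁ hν₂ hρ _
  calc ∫⁻ x, ENNReal.ofReal (∑ i : Fin n, tripNorm
          (relFluxCol n m₁ m₂ γ₁ γ₂ i (n₁ x) (n₂ x) (ν₁ x) (ν₂ x) (w x) (ω x)))
      ≤ ∫⁻ x, ENNReal.ofReal (n * K) * ENNReal.ofReal
          (relEntDens n m₁ m₂ γ₁ γ₂ (n₁ x) (n₂ x) (ν₁ x) (ν₂ x) (w x) (ω x)) := by
        refine lintegral_mono_ae (hρ.mono fun x hx ↦ ?_)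
        rw [← ENNReal.ofReal_mul (by positivity)]
        exact ENNReal.ofReal_le_ofReal (hpt _ _ _ _ (w x) (ω x) (hn₁ x).1 (hn₁ x).2 (hn₂ x).1
          (hn₂ x).2 (hν₁ x) (hν₂ x) hx)
    _ = _ := lintegral_const_mul' _ _ ENNReal.ofReal_ne_top
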